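/- arXiv:1009.4995 — 2 statements merged into one kernel-verified Lean document; each statement's English description precedes it below -/
import Mathlib

section
/- Let A_1, ..., A_n be events in a finite probability space, and for each i let N(i) ⊆ {1,...,n} be a set of indices containing i. Suppose there are reals ε_1, ..., ε_n ∈ (0,1) such that Pr[A_i] ≤ ε_i · ∏_{j ∈ N(i), j ≠ i} (1 − ε_j) for every i, and such that each A_i is mutually independent of the collection {A_j : j ∉ N(i), j ≠ i}. Then Pr[⋂_{i=1}^n A_i^c] ≥ ∏_{i=1}^n (1 − ε_i); in particular this probability is positive. -/
/-!
Write `C S = ⋂ j ∈ S, (A j)ᶜ`. The heart of the proof is the conditional bound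
`μ (A i ∩ C S) ≤ ε i * μ (C S)` for every finite `S ∌ i`, by strong induction on `S`.
Split `S` into `S₁ = S ∩ N i` and `S₂ = S \ N i`. Dropping `S₁` and using that `A i` is
independent of the σ-algebra generated by the `A j`, `j ∉ N i` (π-λ, from the product formula on
finite intersections), gives `μ (A i ∩ C S) ≤ μ (A i) * μ (C S₂)`. Removing the events of `S₁`
one at a time, the induction hypothesis gives `μ (C S) ≥ (∏ j ∈ S₁, (1 - ε j)) * μ (C S₂)`, and
the hypothesis on `μ (A i)` closes the induction. The same chain rule over all indices then
yields `μ (C univ) ≥ ∏ i, (1 - ε i)`.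
-/

open MeasureTheory ProbabilityTheory MeasurableSpace

section

variable {Ω ι : Type*} [MeasurableSpace Ω] {μ : Measure Ω} {A : ι → Set Ω}

theorem indep_generateFrom_of_measureReal_inter_biInter [IsZeroOrProbabilityMeasure μ] {B : Set Ω}
    (hB : MeasurableSet B) (hA : ∀ j, MeasurableSet (A j)) {K : Set ι}
    (h : ∀ T : Finset ι, ↑T ⊆ K →
      μ.real (B ∩ ⋂ j ∈ T, A j) = μ.real B * μ.real (⋂ j ∈ T, A j)) :
    Indep (generateFrom {B}) (generateFrom {t | ∃ k ∈ K, A k = t}) μ := by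
  rw [← generateFrom_piiUnionInter_singleton_left]
  refine IndepSets.indep' (by simpa using hB) ?_ (.singleton B)
    (isPiSystem_piiUnionInter _ (fun _ => .singleton _) K) ?_
  · rw [piiUnionInter_singleton_left]
    rintro _ ⟨T, -, rfl⟩
    exact Finset.measurableSet_biInter T fun j _ => hA j
  · rw [piiUnionInter_singleton_left, IndepSets_iff]
    rintro _ _ rfl ⟨T, hT, rfl⟩
    refine (ENNReal.toReal_eq_toReal_iff' (by finiteness) (by finiteness)).1 ?_
    simpa only [measureReal_def, ← ENNReal.toReal_mul] using h T hT

theorem measureReal_inter_biInter_compl_eq_mul [IsZeroOrProbabilityMeasure μ] {B : Set Ω}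
    (hB : MeasurableSet B) (hA : ∀ j, MeasurableSet (A j)) {K : Set ι}
    (h : ∀ T : Finset ι, ↑T ⊆ K →
      μ.real (B ∩ ⋂ j ∈ T, A j) = μ.real B * μ.real (⋂ j ∈ T, A j))
    {S : Finset ι} (hS : ↑S ⊆ K) :
    μ.real (B ∩ ⋂ j ∈ S, (A j)ᶜ) = μ.real B * μ.real (⋂ j ∈ S, (A j)ᶜ) := by
  have hind := indep_generateFrom_of_measureReal_inter_biInter hB hA h
  rw [Indep_iff] at hind
  simp only [measureReal_def, ← ENNReal.toReal_mul]
  congr 1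
  refine hind _ _ (measurableSet_generateFrom rfl) ?_
  exact Finset.measurableSet_biInter S fun j hj =>
    (measurableSet_generateFrom (s := {t | ∃ k ∈ K, A k = t}) ⟨j, hS hj, rfl⟩).compl

theorem measureReal_biInter_compl_insert [DecidableEq ι] [IsFiniteMeasure μ] {a : ι}
    (ha : MeasurableSet (A a)) (S : Finset ι) :
    μ.real (⋂ j ∈ insert a S, (A j)ᶜ) =
      μ.real (⋂ j ∈ S, (A j)ᶜ) - μ.real (A a ∩ ⋂ j ∈ S, (A j)ᶜ) := by
  rw [Finset.set_biInter_insert, Set.inter_comm, ← Set.sdiff_eq, Set.inter_comm,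
    eq_sub_iff_add_eq, measureReal_sdiff_add_inter ha]

theorem one_sub_mul_le_measureReal_biInter_compl_insert [DecidableEq ι] [IsFiniteMeasure μ]
    {a : ι} {ε : ℝ} (ha : MeasurableSet (A a)) {S : Finset ι}
    (hcond : μ.real (A a ∩ ⋂ j ∈ S, (A j)ᶜ) ≤ ε * μ.real (⋂ j ∈ S, (A j)ᶜ)) :
    (1 - ε) * μ.real (⋂ j ∈ S, (A j)ᶜ) ≤ μ.real (⋂ j ∈ insert a S, (A j)ᶜ) := by
  rw [measureReal_biInter_compl_insert ha]
  linarith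

theorem prod_one_sub_mul_le_measureReal_biInter_compl_union [DecidableEq ι] [IsFiniteMeasure μ]
    {ε : ι → ℝ} (hA : ∀ j, MeasurableSet (A j)) {T R : Finset ι} (hε1 : ∀ j ∈ T, ε j ≤ 1)
    (hcond : ∀ U ⊆ T, ∀ j ∈ T \ U,
      μ.real (A j ∩ ⋂ k ∈ U ∪ R, (A k)ᶜ) ≤ ε j * μ.real (⋂ k ∈ U ∪ R, (A k)ᶜ)) :
    (∏ j ∈ T, (1 - ε j)) * μ.real (⋂ k ∈ R, (A k)ᶜ) ≤ μ.real (⋂ k ∈ T ∪ R, (A k)ᶜ) := by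
  induction T using Finset.induction_on with
  | empty => simp
  | @insert a T ha ih =>
    have hT := Finset.subset_insert a T
    have ih' := ih (fun j hj => hε1 j (hT hj)) fun U hU j hj =>
      hcond U (hU.trans hT) j (Finset.sdiff_subset_sdiff hT le_rfl hj)
    have ha' := one_sub_mul_le_measureReal_biInter_compl_insert (hA a)
      (hcond T hT a (by simp [ha]))
    rw [Finset.prod_insert ha, mul_assoc, Finset.insert_union]
    exact (mul_le_mul_of_nonneg_left ih' (sub_nonneg.2 (hε1 a (T.mem_insert_self a)))).trans ha'

theorem measureReal_inter_biInter_compl_le [DecidableEq ι] [IsZeroOrProbabilityMeasure μ]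
    {N : ι → Finset ι} {ε : ι → ℝ} (hA : ∀ j, MeasurableSet (A j))
    (hε0 : ∀ i, 0 ≤ ε i) (hε1 : ∀ i, ε i ≤ 1)
    (hbound : ∀ i, μ.real (A i) ≤ ε i * ∏ j ∈ (N i).erase i, (1 - ε j))
    (hindep : ∀ i, ∀ T : Finset ι, (∀ j ∈ T, j ∉ N i) →
      μ.real (A i ∩ ⋂ j ∈ T, A j) = μ.real (A i) * μ.real (⋂ j ∈ T, A j))
    (S : Finset ι) {i : ι} (hi : i ∉ S) :
    μ.real (A i ∩ ⋂ j ∈ S, (A j)ᶜ) ≤ ε i * μ.real (⋂ j ∈ S, (A j)ᶜ) := by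
  induction S using Finset.strongInduction generalizing i with
  | H S ih =>
  set S₁ := S ∩ N i
  set S₂ := S \ N i
  have hchain : (∏ j ∈ S₁, (1 - ε j)) * μ.real (⋂ j ∈ S₂, (A j)ᶜ) ≤
      μ.real (⋂ j ∈ S, (A j)ᶜ) := by
    have hS : S₁ ∪ S₂ = S := by rw [Finset.union_comm]; exact Finset.sdiff_union_inter S (N i)
    rw [← hS]
    refine prod_one_sub_mul_le_measureReal_biInter_compl_union hA (fun j _ => hε1 j)
      fun U hU j hj => ih _ ?_ ?_
    -- `U ∪ S₂ ⊊ S` because it misses `j ∈ S₁ \ U`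
    · grind
    · grind
  have hsplit : μ.real (A i ∩ ⋂ j ∈ S₂, (A j)ᶜ) = μ.real (A i) * μ.real (⋂ j ∈ S₂, (A j)ᶜ) :=
    measureReal_inter_biInter_compl_eq_mul (hA i) hA (K := {j | j ∉ N i})
      (fun T hT => hindep i T fun j hj => hT hj) fun j hj => (Finset.mem_sdiff.1 hj).2
  have hprod : ∏ j ∈ (N i).erase i, (1 - ε j) ≤ ∏ j ∈ S₁, (1 - ε j) :=
    Finset.prod_le_prod_of_subset_of_le_one (fun j hj => by grind)
      (fun j _ => sub_nonneg.2 (hε1 j)) fun j _ _ => sub_le_self _ (hε0 j)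
  calc μ.real (A i ∩ ⋂ j ∈ S, (A j)ᶜ) ≤ μ.real (A i ∩ ⋂ j ∈ S₂, (A j)ᶜ) := by
        refine measureReal_mono (Set.inter_subset_inter_right _ ?_)
        exact Set.biInter_subset_biInter_left (Finset.coe_subset.2 Finset.sdiff_subset)
    _ = μ.real (A i) * μ.real (⋂ j ∈ S₂, (A j)ᶜ) := hsplit
    _ ≤ ε i * (∏ j ∈ S₁, (1 - ε j)) * μ.real (⋂ j ∈ S₂, (A j)ᶜ) := by
        gcongr
        exact (hbound i).trans (by gcongr; exact hε0 i)
    _ ≤ ε i * μ.real (⋂ j ∈ S, (A j)ᶜ) := by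
        rw [mul_assoc]
        gcongr
        exact hε0 i

theorem prod_one_sub_le_measureReal_iInter_compl [Fintype ι] [DecidableEq ι]
    [IsProbabilityMeasure μ] {N : ι → Finset ι} {ε : ι → ℝ} (hA : ∀ j, MeasurableSet (A j))
    (hε0 : ∀ i, 0 ≤ ε i) (hε1 : ∀ i, ε i ≤ 1)
    (hbound : ∀ i, μ.real (A i) ≤ ε i * ∏ j ∈ (N i).erase i, (1 - ε j))
    (hindep : ∀ i, ∀ T : Finset ι, (∀ j ∈ T, j ∉ N i) →
      μ.real (A i ∩ ⋂ j ∈ T, A j) = μ.real (A i) * μ.real (⋂ j ∈ T, A j)) :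
    ∏ i, (1 - ε i) ≤ μ.real (⋂ i, (A i)ᶜ) := by
  have h := prod_one_sub_mul_le_measureReal_biInter_compl_union (T := Finset.univ) (R := ∅) hA
    (fun j _ => hε1 j) fun U _ j hj =>
      measureReal_inter_biInter_compl_le hA hε0 hε1 hbound hindep (U ∪ ∅)
        (by simpa using (Finset.mem_sdiff.1 hj).2)
  simpa using h

end

theorem measureReal_sum_smul_dirac {Ω : Type*} [Fintype Ω] [MeasurableSpace Ω]
    [DiscreteMeasurableSpace Ω] {p : Ω → ℝ} (hp : ∀ ω, 0 ≤ p ω) (S : Set Ω) :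
    (∑ ω, ENNReal.ofReal (p ω) • Measure.dirac ω).real S = ∑ ω, S.indicator p ω := by
  have hterm (ω : Ω) :
      ENNReal.ofReal (p ω) * S.indicator 1 ω = ENNReal.ofReal (S.indicator p ω) := by
    by_cases hω : ω ∈ S <;> simp [hω]
  have hnonneg (ω : Ω) : 0 ≤ S.indicator p ω := Set.indicator_nonneg (fun ω _ => hp ω) ω
  simp only [measureReal_def, Measure.coe_finsetSum, Finset.sum_apply, Measure.smul_apply,
    Measure.dirac_apply' _ (MeasurableSet.of_discrete), smul_eq_mul, hterm]
  rw [← ENNReal.ofReal_sum_of_nonneg fun ω _ => hnonneg ω,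
    ENNReal.toReal_ofReal (Finset.sum_nonneg fun ω _ => hnonneg ω)]

theorem isProbabilityMeasure_sum_smul_dirac {Ω : Type*} [Fintype Ω] [MeasurableSpace Ω]
    {p : Ω → ℝ} (hp : ∀ ω, 0 ≤ p ω) (hsum : ∑ ω, p ω = 1) :
    IsProbabilityMeasure (∑ ω, ENNReal.ofReal (p ω) • Measure.dirac ω) := by
  constructor
  simp [← ENNReal.ofReal_sum_of_nonneg fun ω _ => hp ω, hsum]

open Finset in
theorem lovasz_local_lemma_general
    {Ω : Type*} [Fintype Ω] (p : Ω → ℝ)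
    (hp : ∀ ω, 0 ≤ p ω) (hsum : ∑ ω, p ω = 1)
    (Pr : Set Ω → ℝ) (hPr : ∀ S : Set Ω, Pr S = ∑ ω, S.indicator p ω)
    (n : ℕ) (A : Fin n → Set Ω) (N : Fin n → Finset (Fin n))
    (ε : Fin n → ℝ) (hε0 : ∀ i, 0 < ε i) (hε1 : ∀ i, ε i < 1)
    (hbound : ∀ i, Pr (A i) ≤ ε i * ∏ j ∈ (N i).erase i, (1 - ε j))
    (hindep : ∀ i, ∀ T : Finset (Fin n), (∀ j ∈ T, j ∉ N i) →
      Pr (A i ∩ ⋂ j ∈ T, A j) = Pr (A i) * Pr (⋂ j ∈ T, A j)) :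
    ∏ i, (1 - ε i) ≤ Pr (⋂ i, (A i)ᶜ) ∧ 0 < Pr (⋂ i, (A i)ᶜ) := by
  let _ : MeasurableSpace Ω := ⊤
  have := isProbabilityMeasure_sum_smul_dirac hp hsum
  have hPr_eq : Pr = (∑ ω, ENNReal.ofReal (p ω) • Measure.dirac ω).real :=
    funext fun S => (hPr S).trans (measureReal_sum_smul_dirac hp S).symm
  subst hPr_eq
  have hLLL := prod_one_sub_le_measureReal_iInter_compl (fun _ => measurableSet_top)
    (fun i => (hε0 i).le) (fun i => (hε1 i).le) hbound hindep
  exact ⟨hLLL, (prod_pos fun i _ => sub_pos.2 (hε1 i)).trans_le hLLL⟩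

open Finset in
/-- General (asymmetric) Lovász Local Lemma on a finite probability space. -/
theorem lovasz_local_lemma
    {Ω : Type*} [Fintype Ω] (p : Ω → ℝ)
    (hp : ∀ ω, 0 ≤ p ω) (hsum : ∑ ω, p ω = 1)
    (Pr : Set Ω → ℝ) (hPr : ∀ S : Set Ω, Pr S = ∑ ω, S.indicator p ω)
    (n : ℕ) (A : Fin n → Set Ω) (N : Fin n → Finset (Fin n))
    (hself : ∀ i, i ∈ N i)
    (ε : Fin n → ℝ) (hε0 : ∀ i, 0 < ε i) (hε1 : ∀ i, ε i < 1)
    (hbound : ∀ i, Pr (A i) ≤ ε i * ∏ j ∈ (N i).erase i, (1 - ε j))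
    (hindep : ∀ i, ∀ T : Finset (Fin n), (∀ j ∈ T, j ∉ N i) →
      Pr (A i ∩ ⋂ j ∈ T, A j) = Pr (A i) * Pr (⋂ j ∈ T, A j)) :
    ∏ i, (1 - ε i) ≤ Pr (⋂ i, (A i)ᶜ) ∧ 0 < Pr (⋂ i, (A i)ᶜ) :=
  lovasz_local_lemma_general p hp hsum Pr hPr n A N ε hε0 hε1 hbound hindep
end

section
/- Let ~ be the repetition pattern formed by pairwise disjoint 'active' intervals I_1, I_2, ... ⊆ ℕ, where on I_k (of length p_k) indices are equivalent iff their difference is a multiple of q_k, and q_k ≤ p_k ≤ α·q_k for a fixed real α > 1; indices outside all active intervals are equivalent only to themselves. Assume moreover that for each k the gap between consecutive active intervals is at least α times the sum of the lengths of the two adjacent intervals. Then for every interval A ⊆ ℕ of length ℓ, the number #_f A of equivalence classes meeting A satisfies #_f A ≥ ℓ/α. -/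
/-- The repetition-pattern relation given by active intervals `[a k, a k + p k)`
with periods `q k`: two indices are related iff they are equal, or lie in a common
active interval and are congruent modulo its period. -/
def patRel (a p q : ℕ → ℕ) (i j : ℕ) : Prop :=
  i = j ∨ ∃ k, a k ≤ i ∧ i < a k + p k ∧ a k ≤ j ∧ j < a k + p k ∧ i ≡ j [MOD q k]

/-! Each class of the pattern that meets the window `[s, e)` is counted once, through its least
element in the window. The window is cut from the left into blocks: a single free index, or the
part of an active interval `I_k` that the window covers. A block of length `L ≤ p_k` inside `I_k`
contributes its first `min L q_k ≥ L / α` indices as least elements, no index of a later block is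
related to an index of an earlier one, and so the counts add up. -/

open Finset

open scoped Classical in
noncomputable def leastReps (R : ℕ → ℕ → Prop) (s e : ℕ) : Finset ℕ :=
  (Ico s e).filter fun i => ∀ j ∈ Ico s e, R i j → i ≤ j

section LeastReps

variable {R : ℕ → ℕ → Prop}

lemma mem_leastReps {s e i : ℕ} :
    i ∈ leastReps R s e ↔ i ∈ Ico s e ∧ ∀ j ∈ Ico s e, R i j → i ≤ j := by
  classical
  simp only [leastReps, mem_filter]

lemma left_mem_leastReps {s e : ℕ} (h : s < e) : s ∈ leastReps R s e :=
  mem_leastReps.2 ⟨left_mem_Ico.2 h, fun _ hj _ => (mem_Ico.1 hj).1⟩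

lemma card_leastReps_le_ncard_image (hR : ∀ i, R i i) (s e : ℕ) :
    #(leastReps R s e) ≤ ((fun i => {j | R i j}) '' Set.Ico s e).ncard := by
  have hinj : Set.InjOn (fun i => {j | R i j}) (leastReps R s e : Set ℕ) := by
    intro i hi i' hi' heq
    have hii' : R i i' := (Set.ext_iff.1 heq i').2 (hR i')
    have hi'i : R i' i := (Set.ext_iff.1 heq i).1 (hR i)
    rw [mem_coe, mem_leastReps] at hi hi'
    exact le_antisymm (hi.2 i' hi'.1 hii') (hi'.2 i hi.1 hi'i)
  rw [← Set.ncard_coe_finset, ← hinj.ncard_image]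
  refine Set.ncard_le_ncard (Set.image_mono fun i hi => ?_) ((Set.finite_Ico s e).image _)
  simpa using (mem_leastReps.1 hi).1

lemma card_leastReps_add_card_leastReps_le {s c e : ℕ} (hsc : s ≤ c) (hce : c ≤ e)
    (hsep : ∀ v ∈ Ico c e, ∀ u ∈ Ico s c, ¬ R v u) :
    #(leastReps R s c) + #(leastReps R c e) ≤ #(leastReps R s e) := by
  have hdisj : Disjoint (leastReps R s c) (leastReps R c e) := by
    refine disjoint_left.2 fun i hi hi' => ?_
    have := (mem_leastReps.1 hi).1
    have := (mem_leastReps.1 hi').1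
    simp only [mem_Ico] at *
    omega
  rw [← card_union_of_disjoint hdisj]
  refine card_le_card fun i hi => ?_
  rcases mem_union.1 hi with hi | hi
  · obtain ⟨hiI, hmin⟩ := mem_leastReps.1 hi
    refine mem_leastReps.2 ⟨Ico_subset_Ico_right hce hiI, fun j hj hij => ?_⟩
    by_cases hjc : j < c
    · exact hmin j (mem_Ico.2 ⟨(mem_Ico.1 hj).1, hjc⟩) hij
    · exact ((mem_Ico.1 hiI).2.trans_le (not_lt.1 hjc)).le
  · obtain ⟨hiI, hmin⟩ := mem_leastReps.1 hi
    refine mem_leastReps.2 ⟨Ico_subset_Ico_left hsc hiI, fun j hj hij => ?_⟩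
    by_cases hjc : j < c
    · exact absurd hij (hsep i hiI j (mem_Ico.2 ⟨(mem_Ico.1 hj).1, hjc⟩))
    · exact hmin j (mem_Ico.2 ⟨not_lt.1 hjc, (mem_Ico.1 hj).2⟩) hij

lemma le_mul_card_leastReps_of_blocks {α : ℝ} (hα : 0 ≤ α)
    (hblock : ∀ s e, s < e → ∃ c, s < c ∧ c ≤ e ∧
      ((c - s : ℕ) : ℝ) ≤ α * #(leastReps R s c) ∧
      ∀ v ∈ Ico c e, ∀ u ∈ Ico s c, ¬ R v u)
    (ℓ s : ℕ) : (ℓ : ℝ) ≤ α * #(leastReps R s (s + ℓ)) := by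
  induction ℓ using Nat.strong_induction_on generalizing s with
  | _ ℓ ih =>
    rcases Nat.eq_zero_or_pos ℓ with rfl | hℓ
    · simp [leastReps]
    obtain ⟨c, hsc, hce, hblock_le, hsep⟩ := hblock s (s + ℓ) (by omega)
    have hrest := ih (s + ℓ - c) (by omega) c
    rw [show c + (s + ℓ - c) = s + ℓ by omega] at hrest
    have hcard :
        (#(leastReps R s c) + #(leastReps R c (s + ℓ)) : ℝ) ≤ #(leastReps R s (s + ℓ)) :=
      mod_cast card_leastReps_add_card_leastReps_le hsc.le hce hsep
    have hsplit : (ℓ : ℝ) = ((c - s : ℕ) : ℝ) + ((s + ℓ - c : ℕ) : ℝ) := by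
      rw [← Nat.cast_add]; congr 1; omega
    nlinarith

end LeastReps

section PatRel

variable {a p q : ℕ → ℕ}

lemma patRel_refl (i : ℕ) : patRel a p q i i := Or.inl rfl

lemma eq_of_mem_active (horder : ∀ k, a k + p k ≤ a (k + 1)) {k k' i : ℕ}
    (hk : a k ≤ i ∧ i < a k + p k) (hk' : a k' ≤ i ∧ i < a k' + p k') : k = k' := by
  have hmono : Monotone a :=
    monotone_nat_of_le_succ fun n => (Nat.le_add_right _ _).trans (horder n)
  have hsep : ∀ {m n}, m < n → a m + p m ≤ a n := fun h => (horder _).trans (hmono h)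
  rcases lt_trichotomy k k' with h | h | h
  · have := hsep h; omega
  · exact h
  · have := hsep h; omega

lemma Ico_subset_leastReps_patRel (horder : ∀ k, a k + p k ≤ a (k + 1)) {k s c : ℕ}
    (hs : a k ≤ s) (hc : c ≤ a k + p k) :
    Ico s (min c (s + q k)) ⊆ leastReps (patRel a p q) s c := by
  intro i hi
  rw [mem_Ico] at hi
  refine mem_leastReps.2 ⟨mem_Ico.2 ⟨hi.1, by omega⟩, fun j hj hij => ?_⟩
  rw [mem_Ico] at hj
  by_contra! hji
  rcases hij with rfl | ⟨k', hik', hik'', hjk', -, hmod⟩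
  · exact lt_irrefl _ hji
  obtain rfl : k = k' := eq_of_mem_active horder ⟨by omega, by omega⟩ ⟨hik', hik''⟩
  -- `i - j` is a positive multiple of `q k` below `q k`
  have hdvd : q k ∣ i - j := (Nat.modEq_iff_dvd' hji.le).1 hmod.symm
  have := Nat.le_of_dvd (by omega) hdvd
  omega

lemma cast_le_mul_min {α : ℝ} (hα : 1 ≤ α) {L p q : ℕ} (hL : L ≤ p)
    (hpq : (p : ℝ) ≤ α * q) :
    (L : ℝ) ≤ α * (min L q : ℕ) := by
  rcases min_cases L q with ⟨hm, -⟩ | ⟨hm, -⟩ <;> rw [hm]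
  · nlinarith [(Nat.cast_nonneg L : (0 : ℝ) ≤ L)]
  · exact (Nat.cast_le.2 hL).trans hpq

lemma exists_block_patRel {α : ℝ} (hα : 1 ≤ α) (hpq : ∀ k, (p k : ℝ) ≤ α * q k)
    (horder : ∀ k, a k + p k ≤ a (k + 1)) {s e : ℕ} (hse : s < e) :
    ∃ c, s < c ∧ c ≤ e ∧ ((c - s : ℕ) : ℝ) ≤ α * #(leastReps (patRel a p q) s c) ∧
      ∀ v ∈ Ico c e, ∀ u ∈ Ico s c, ¬ patRel a p q v u := by
  by_cases hactive : ∃ k, a k ≤ s ∧ s < a k + p k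
  · obtain ⟨k, hks, hsk⟩ := hactive
    set c := min e (a k + p k) with hc
    refine ⟨c, by omega, min_le_left _ _, ?_, ?_⟩
    · have hcard : min (c - s) (q k) ≤ #(leastReps (patRel a p q) s c) := by
        have := card_le_card
          (Ico_subset_leastReps_patRel (q := q) (c := c) horder hks (by omega))
        rw [Nat.card_Ico] at this
        omega
      calc ((c - s : ℕ) : ℝ) ≤ α * (min (c - s) (q k) : ℕ) :=
            cast_le_mul_min hα (by omega) (hpq k)
        _ ≤ α * #(leastReps (patRel a p q) s c) := by gcongr
    · rintro v hv u hu (rfl | ⟨k', hvk', hvk'', huk', huk'', -⟩)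
      · simp only [mem_Ico] at hu hv; omega
      · simp only [mem_Ico] at hu hv
        obtain rfl : k = k' := eq_of_mem_active horder ⟨by omega, by omega⟩ ⟨huk', huk''⟩
        omega
  · push Not at hactive
    refine ⟨s + 1, by omega, hse, ?_, ?_⟩
    · have hcard : 1 ≤ #(leastReps (patRel a p q) s (s + 1)) :=
        card_pos.2 ⟨s, left_mem_leastReps (by omega)⟩
      rw [Nat.add_sub_cancel_left, Nat.cast_one]
      exact one_le_mul_of_one_le_of_one_le hα (mod_cast hcard)
    · rintro v hv u hu (rfl | ⟨k, -, -, huk, huk', -⟩)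
      · simp only [mem_Ico] at hu hv; omega
      · simp only [mem_Ico] at hu
        have := hactive k (by omega)
        omega

end PatRel

theorem free_bits_density_general (α : ℝ) (hα : 1 < α) (a p q : ℕ → ℕ)
    (hqp : ∀ k, q k ≤ p k ∧ (p k : ℝ) ≤ α * q k)
    (horder : ∀ k, a k + p k ≤ a (k + 1)) :
    ∀ s ℓ : ℕ,
      (ℓ : ℝ) / α ≤ (((fun i => {j | patRel a p q i j}) '' Set.Ico s (s + ℓ)).ncard : ℝ) := by
  intro s ℓ
  rw [div_le_iff₀ (by linarith)]
  calc (ℓ : ℝ)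
      ≤ α * #(leastReps (patRel a p q) s (s + ℓ)) :=
        le_mul_card_leastReps_of_blocks (by linarith)
          (fun _ _ => exists_block_patRel hα.le (fun k => (hqp k).2) horder) ℓ s
    _ ≤ α * ((fun i => {j | patRel a p q i j}) '' Set.Ico s (s + ℓ)).ncard := by
        gcongr
        exact_mod_cast card_leastReps_le_ncard_image patRel_refl s (s + ℓ)
    _ = ((fun i => {j | patRel a p q i j}) '' Set.Ico s (s + ℓ)).ncard * α := mul_comm _ _

/-- Density of free bits: under the gap and period conditions, every interval of
length `ℓ` meets at least `ℓ/α` equivalence classes of the repetition pattern. -/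
theorem free_bits_density (α : ℝ) (hα : 1 < α) (a p q : ℕ → ℕ)
    (hq : ∀ k, 1 ≤ q k)
    (hqp : ∀ k, q k ≤ p k ∧ (p k : ℝ) ≤ α * q k)
    (horder : ∀ k, a k + p k ≤ a (k + 1))
    (hgap : ∀ k, α * (p k + p (k + 1)) ≤ ((a (k + 1) : ℝ) - (a k + p k))) :
    ∀ s ℓ : ℕ,
      (ℓ : ℝ) / α ≤ (((fun i => {j | patRel a p q i j}) '' Set.Ico s (s + ℓ)).ncard : ℝ) :=
  free_bits_density_general α hα a p q hqp horder
end
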